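/- The solution operator S : ℝ^n → ℝ^n of VI is directionally differentiable: for every u, h ∈ ℝ^n the limit S′(u; h) := lim_{t→0⁺} (S(u + t h) − S(u))/t exists, and S′(u; h) is the unique solution η ∈ 𝒦(y), with y = S(u), of the variational inequality of the first kind ⟨Aη, v−η⟩ + ∑_{j∈ℐ(y)} ⟨(𝕂η)_j/|(𝕂y)_j| − ⟨(𝕂y)_j, (𝕂η)_j⟩ (𝕂y)_j/|(𝕂y)_j|³, (𝕂v)_j − (𝕂η)_j⟩ ≥ ⟨h, v−η⟩ for all v ∈ 𝒦(y). -/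

import Mathlib

open scoped RealInnerProductSpace BigOperators Classical Topology

noncomputable section

abbrev Euc (n : ℕ) := EuclideanSpace ℝ (Fin n)
abbrev Rows (m d : ℕ) := PiLp 2 (fun _ : Fin m => EuclideanSpace ℝ (Fin d))

variable {n m d : ℕ}

/-- `y` solves the variational inequality VI(u). -/
def IsVISol (A : Euc n →ₗ[ℝ] Euc n) (K : Euc n →ₗ[ℝ] Rows m d) (u y : Euc n) : Prop :=
  ∀ v : Euc n, ⟪A y, v - y⟫ + ∑ j, (‖K v j‖ - ‖K y j‖) ≥ ⟪u, v - y⟫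

/-- `q` is a slack variable for the pair `(u, y)`: primal-dual system. -/
def IsSlack (A : Euc n →ₗ[ℝ] Euc n) (K : Euc n →ₗ[ℝ] Rows m d) (u y : Euc n)
    (q : Rows m d) : Prop :=
  A y + (LinearMap.adjoint K) q = u ∧ (∀ j, ⟪q j, K y j⟫ = ‖K y j‖) ∧ ∀ j, ‖q j‖ ≤ 1

/-- The complementarity relations alone. -/
def ComplRel (K : Euc n →ₗ[ℝ] Rows m d) (y : Euc n) (q : Rows m d) : Prop :=
  (∀ j, ⟪q j, K y j⟫ = ‖K y j‖) ∧ ∀ j, ‖q j‖ ≤ 1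

/-- The cone `𝒦(y)` defined via a slack variable `q`. -/
def KconeQ (K : Euc n →ₗ[ℝ] Rows m d) (y : Euc n) (q : Rows m d) : Set (Euc n) :=
  {v | (∀ j, ‖q j‖ < 1 → K v j = 0) ∧
       ∀ j, ‖q j‖ = 1 → K y j = 0 → ⟪q j, K v j⟫ = ‖K v j‖}

/-- `∑_{j∈ℐ(y)} ⟨(𝕂y)_j/|(𝕂y)_j|, (𝕂v)_j⟩ + ∑_{j∈𝒜(y)} |(𝕂v)_j|`. -/
def dirRHS (K : Euc n →ₗ[ℝ] Rows m d) (y v : Euc n) : ℝ :=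
  ∑ j, if K y j ≠ 0 then ⟪(‖K y j‖)⁻¹ • K y j, K v j⟫ else ‖K v j‖

/-- The cone `𝒦(y)` in its slack-variable-free form. -/
def Kcone (A : Euc n →ₗ[ℝ] Euc n) (K : Euc n →ₗ[ℝ] Rows m d) (u y : Euc n) : Set (Euc n) :=
  {v | ⟪u - A y, v⟫ ≥ dirRHS K y v}

/-- Second order term `∑_{j∈ℐ(y)} ⟨(𝕂η)_j/|(𝕂y)_j| − ⟨(𝕂y)_j,(𝕂η)_j⟩(𝕂y)_j/|(𝕂y)_j|³, (𝕂w)_j⟩`. -/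
def secondForm (K : Euc n →ₗ[ℝ] Rows m d) (y η w : Euc n) : ℝ :=
  ∑ j, if K y j ≠ 0 then
      ⟪(‖K y j‖)⁻¹ • K η j - ((⟪K y j, K η j⟫) / ‖K y j‖ ^ 3) • K y j, K w j⟫
    else 0

/-- The quadratic functional `f_y` whose minimizer over `𝒦(y)` is the directional derivative. -/
def fy (A : Euc n →ₗ[ℝ] Euc n) (K : Euc n →ₗ[ℝ] Rows m d) (y h η : Euc n) : ℝ :=
  (1 / 2) * ⟪η, A η⟫ - ⟪h, η⟫ +
    (1 / 2) * ∑ j, if K y j ≠ 0 then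
        ‖K η j‖ ^ 2 / ‖K y j‖ - (⟪K y j, K η j⟫) ^ 2 / ‖K y j‖ ^ 3
      else 0

/-- `η` solves the VI of the first kind characterizing the directional derivative. -/
def VI1Sol (A : Euc n →ₗ[ℝ] Euc n) (K : Euc n →ₗ[ℝ] Rows m d) (u y h η : Euc n) : Prop :=
  η ∈ Kcone A K u y ∧ ∀ v ∈ Kcone A K u y,
    ⟪A η, v - η⟫ + secondForm K y η (v - η) ≥ ⟪h, v - η⟫

/-- Bouligand subdifferential of a map `S` at `u`. -/
def BSubdiff (S : Euc n → Euc n) (u : Euc n) : Set (Euc n →L[ℝ] Euc n) :=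
  {G | ∃ (uk : ℕ → Euc n) (Gk : ℕ → (Euc n →L[ℝ] Euc n)),
    (∀ k, HasFDerivAt S (Gk k) (uk k)) ∧
    Filter.Tendsto uk Filter.atTop (nhds u) ∧
    Filter.Tendsto Gk Filter.atTop (nhds G)}

/-- Biactive set associated with `y` and a slack variable `q`. -/
def Biactive (K : Euc n →ₗ[ℝ] Rows m d) (y : Euc n) (q : Rows m d) : Set (Fin m) :=
  {j | K y j = 0 ∧ ‖q j‖ = 1}

/-- The subspace `V` associated with a splitting `ℬ₀ ∪ ℬ₁` of the biactive set. -/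
def Vsub (K : Euc n →ₗ[ℝ] Rows m d) (q : Rows m d) (B0 B1 : Set (Fin m)) : Set (Euc n) :=
  {v | (∀ j, ‖q j‖ < 1 → K v j = 0) ∧ (∀ j ∈ B0, K v j = 0) ∧
       ∀ j ∈ B1, ∃ c : ℝ, K v j = c • q j}

/-! The solution operator is Lipschitz, because `A` is coercive and the nonsmooth term is
convex; hence the difference quotients `(S (u + t • h) - S u) / t` stay in a compact ball, and
they converge once every cluster point solves the VI of the first kind, whose solution is unique
because `A` is coercive and the second-order form `secondForm y` is positive semidefinite.

To identify a cluster point `η`, expand `‖(𝕂y)_j + t (𝕂w)_j‖` to second order in `t`: on inactive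
rows it is `t ‖(𝕂w)_j‖`, on active rows `‖(𝕂y)_j‖ + t ⟪(𝕂y)_j, (𝕂w)_j⟫ / ‖(𝕂y)_j‖ + t² R(t)` with a
remainder jointly continuous up to `t = 0`. Since `y` solves VI(u), the first-order part
`dirRHS y w - ⟪u - A y, w⟫` is nonnegative, and `𝒦(y)` is its zero set. Testing VI(u + t h) with
`y + t w` then shows, in the limit, first that this part vanishes at `η`, so `η ∈ 𝒦(y)`, and then,
for `w ∈ 𝒦(y)`, a second-order inequality between `η` and `w`; convexity of `𝒦(y)` turns it into
the VI of the first kind. -/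

open Filter Metric

section NormExpansion

variable {E : Type*} [NormedAddCommGroup E] [InnerProductSpace ℝ E]

/-- Rationalizing `‖a + t • b‖ - ‖a‖ = (2 t ⟪a, b⟫ + t² ‖b‖²) / (‖a + t • b‖ + ‖a‖)` gives the
second-order remainder of `t ↦ ‖a + t • b‖` in a form that is jointly continuous in `(b, t)`
when `a ≠ 0`, including at `t = 0`. -/
def normRemainder (a b : E) (t : ℝ) : ℝ :=
  (‖b‖ ^ 2 * ‖a‖ - ⟪a, b⟫ * (2 * ⟪a, b⟫ + t * ‖b‖ ^ 2) / (‖a + t • b‖ + ‖a‖)) /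
    (‖a‖ * (‖a + t • b‖ + ‖a‖))

lemma norm_add_smul_sq (a b : E) (t : ℝ) :
    ‖a + t • b‖ ^ 2 = ‖a‖ ^ 2 + 2 * t * ⟪a, b⟫ + t ^ 2 * ‖b‖ ^ 2 := by
  rw [norm_add_sq_real, inner_smul_right, norm_smul, mul_pow, Real.norm_eq_abs, sq_abs]
  ring

lemma norm_add_smul_eq {a : E} (ha : a ≠ 0) (b : E) (t : ℝ) :
    ‖a + t • b‖ = ‖a‖ + t * (⟪a, b⟫ / ‖a‖) + t ^ 2 * normRemainder a b t := by
  have ha' : 0 < ‖a‖ := norm_pos_iff.mpr ha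
  have hden : 0 < ‖a + t • b‖ + ‖a‖ := by positivity
  rw [normRemainder]
  field_simp
  linear_combination (‖a‖ * (‖a + t • b‖ + ‖a‖) - t * ⟪a, b⟫) * norm_add_smul_sq a b t

lemma normRemainder_at_zero {a : E} (ha : a ≠ 0) (b : E) :
    normRemainder a b 0 = (‖b‖ ^ 2 / ‖a‖ - ⟪a, b⟫ ^ 2 / ‖a‖ ^ 3) / 2 := by
  have ha' : 0 < ‖a‖ := norm_pos_iff.mpr ha
  simp only [normRemainder, zero_smul, add_zero, zero_mul]
  field_simp
  ring

lemma Continuous.normRemainder {X : Type*} [TopologicalSpace X] {a : E} (ha : a ≠ 0)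
    {f : X → E} {g : X → ℝ} (hf : Continuous f) (hg : Continuous g) :
    Continuous fun x => normRemainder a (f x) (g x) := by
  have hden : ∀ x, ‖a + g x • f x‖ + ‖a‖ ≠ 0 := fun x => by
    have := norm_pos_iff.mpr ha; positivity
  refine Continuous.div ?_ (by fun_prop) fun x => mul_ne_zero (norm_ne_zero_iff.mpr ha) (hden x)
  exact Continuous.sub (by fun_prop) (Continuous.div (by fun_prop) (by fun_prop) hden)

lemma inner_sq_div_pow_three_le (a b : E) : ⟪a, b⟫ ^ 2 / ‖a‖ ^ 3 ≤ ‖b‖ ^ 2 / ‖a‖ := by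
  rcases eq_or_ne a 0 with rfl | ha
  · simp
  have ha' : 0 < ‖a‖ := norm_pos_iff.mpr ha
  have hcs : ⟪a, b⟫ ^ 2 ≤ ‖a‖ ^ 2 * ‖b‖ ^ 2 := by
    simpa [sq, real_inner_self_eq_norm_mul_norm, mul_mul_mul_comm] using
      real_inner_mul_inner_self_le a b
  rw [div_le_div_iff₀ (by positivity) ha']
  nlinarith

end NormExpansion

section Rows

variable (K : Euc n →ₗ[ℝ] Rows m d) (y : Euc n)

lemma continuous_apply_row (j : Fin m) : Continuous fun w : Euc n => K w j := by
  -- without this instance in context, elaborating `continuous_of_finiteDimensional` times out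
  have : ContinuousSMul ℝ (Rows m d) := inferInstance
  exact (continuous_apply j).comp
    ((PiLp.continuous_ofLp 2 _).comp K.continuous_of_finiteDimensional)

lemma apply_add_smul_row (w : Euc n) (t : ℝ) (j : Fin m) :
    K (y + t • w) j = K y j + t • K w j := by
  simp

def rowRemainder (w : Euc n) (t : ℝ) : ℝ :=
  ∑ j, if K y j ≠ 0 then normRemainder (K y j) (K w j) t else 0

lemma sum_norm_add_smul_sub (w : Euc n) {t : ℝ} (ht : 0 < t) :
    ∑ j, (‖K (y + t • w) j‖ - ‖K y j‖) = t * dirRHS K y w + t ^ 2 * rowRemainder K y w t := by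
  rw [dirRHS, rowRemainder, Finset.mul_sum, Finset.mul_sum, ← Finset.sum_add_distrib]
  refine Finset.sum_congr rfl fun j _ => ?_
  rw [apply_add_smul_row]
  by_cases hj : K y j = 0
  · simp [hj, norm_smul, abs_of_pos ht]
  · rw [norm_add_smul_eq hj, if_pos hj, if_pos hj, real_inner_smul_left]
    ring

lemma continuous_dirRHS : Continuous (dirRHS K y) := by
  refine continuous_finsetSum _ fun j _ => ?_
  split_ifs
  · exact continuous_const.inner (continuous_apply_row K j)
  · exact (continuous_apply_row K j).norm

lemma Continuous.rowRemainder {X : Type*} [TopologicalSpace X] {f : X → Euc n} {g : X → ℝ}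
    (hf : Continuous f) (hg : Continuous g) : Continuous fun x => rowRemainder K y (f x) (g x) := by
  unfold _root_.rowRemainder
  refine continuous_finsetSum _ fun j _ => ?_
  split_ifs with hj
  · exact .normRemainder hj ((continuous_apply_row K j).comp hf) hg
  · exact continuous_const

lemma dirRHS_zero : dirRHS K y 0 = 0 := by
  simp [dirRHS]

lemma secondForm_eq (a w : Euc n) :
    secondForm K y a w = ∑ j, if K y j ≠ 0 then
      ⟪K a j, K w j⟫ / ‖K y j‖ - ⟪K y j, K a j⟫ * ⟪K y j, K w j⟫ / ‖K y j‖ ^ 3 else 0 := by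
  refine Finset.sum_congr rfl fun j _ => ?_
  split_ifs
  · rw [inner_sub_left, real_inner_smul_left, real_inner_smul_left]
    ring
  · rfl

lemma rowRemainder_at_zero (w : Euc n) : rowRemainder K y w 0 = secondForm K y w w / 2 := by
  rw [rowRemainder, secondForm_eq, Finset.sum_div]
  refine Finset.sum_congr rfl fun j _ => ?_
  split_ifs with hj
  · rw [normRemainder_at_zero hj, real_inner_self_eq_norm_sq]
    ring
  · simp

lemma secondForm_self_nonneg (w : Euc n) : 0 ≤ secondForm K y w w := by
  rw [secondForm_eq]
  refine Finset.sum_nonneg fun j _ => ?_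
  split_ifs
  · rw [real_inner_self_eq_norm_sq, ← sq]
    exact sub_nonneg.mpr (inner_sq_div_pow_three_le _ _)
  · rfl

lemma secondForm_add_smul_self (z w : Euc n) (s : ℝ) :
    secondForm K y (z + s • w) (z + s • w)
      = secondForm K y z z + 2 * s * secondForm K y z w + s ^ 2 * secondForm K y w w := by
  simp only [secondForm_eq, Finset.mul_sum, ← Finset.sum_add_distrib]
  refine Finset.sum_congr rfl fun j _ => ?_
  split_ifs
  · simp only [apply_add_smul_row, inner_add_left, inner_add_right, real_inner_smul_left,
      real_inner_smul_right, real_inner_comm (K z j) (K w j)]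
    ring
  · simp

lemma secondForm_sub_add_sub (a b : Euc n) :
    secondForm K y a (b - a) + secondForm K y b (a - b) = -secondForm K y (a - b) (a - b) := by
  simp only [secondForm_eq, ← Finset.sum_add_distrib, ← Finset.sum_neg_distrib]
  refine Finset.sum_congr rfl fun j _ => ?_
  split_ifs
  · simp only [map_sub, PiLp.sub_apply, inner_sub_left, inner_sub_right,
      real_inner_comm (K a j) (K b j)]
    ring
  · simp

lemma dirRHS_smul_add_smul_le (v w : Euc n) {a b : ℝ} (ha : 0 ≤ a) (hb : 0 ≤ b) :
    dirRHS K y (a • v + b • w) ≤ a * dirRHS K y v + b * dirRHS K y w := by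
  simp only [dirRHS, Finset.mul_sum, ← Finset.sum_add_distrib]
  refine Finset.sum_le_sum fun j _ => ?_
  simp only [map_add, map_smul, PiLp.add_apply, PiLp.smul_apply]
  split_ifs
  · simp only [inner_add_right, real_inner_smul_right, le_refl]
  · calc ‖a • K v j + b • K w j‖ ≤ ‖a • K v j‖ + ‖b • K w j‖ := norm_add_le _ _
      _ = a * ‖K v j‖ + b * ‖K w j‖ := by
        rw [norm_smul, norm_smul, Real.norm_of_nonneg ha, Real.norm_of_nonneg hb]

lemma convex_Kcone (A : Euc n →ₗ[ℝ] Euc n) (u : Euc n) : Convex ℝ (Kcone A K u y) := by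
  intro v hv w hw a b ha hb _
  calc dirRHS K y (a • v + b • w) ≤ a * dirRHS K y v + b * dirRHS K y w :=
        dirRHS_smul_add_smul_le K y v w ha hb
    _ ≤ a * ⟪u - A y, v⟫ + b * ⟪u - A y, w⟫ := by gcongr <;> assumption
    _ = ⟪u - A y, a • v + b • w⟫ := by
      rw [inner_add_right, real_inner_smul_right, real_inner_smul_right]

end Rows

lemma nonneg_of_eventually_nonneg_mul_add_sq_mul {a : ℝ} {g : ℝ → ℝ} (hg : ContinuousAt g 0)
    (h : ∀ᶠ s in 𝓝[>] 0, 0 ≤ s * a + s ^ 2 * g s) : 0 ≤ a := by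
  have hlim : Tendsto (fun s => a + s * g s) (𝓝[>] 0) (𝓝 a) := by
    have := (tendsto_const_nhds (x := a)).add ((continuousAt_id.tendsto).mul hg)
    simpa using this.mono_left nhdsWithin_le_nhds
  refine ge_of_tendsto hlim ?_
  filter_upwards [h, self_mem_nhdsWithin] with s hs (hs0 : 0 < s)
  exact nonneg_of_mul_nonneg_right (by linarith) hs0

lemma exists_pos_mul_norm_sq_le_inner {E : Type*} [NormedAddCommGroup E]
    [InnerProductSpace ℝ E] [FiniteDimensional ℝ E] (A : E →ₗ[ℝ] E)
    (hA : ∀ x, x ≠ 0 → 0 < ⟪x, A x⟫) :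
    ∃ c, 0 < c ∧ ∀ x, c * ‖x‖ ^ 2 ≤ ⟪x, A x⟫ := by
  cases subsingleton_or_nontrivial E
  · exact ⟨1, one_pos, fun x => by simp [Subsingleton.elim x 0]⟩
  have hcont : Continuous fun x : E => ⟪x, A x⟫ :=
    continuous_id.inner A.continuous_of_finiteDimensional
  obtain ⟨x₀, hx₀, hmin⟩ := (isCompact_sphere (0 : E) 1).exists_isMinOn
    (NormedSpace.sphere_nonempty.mpr zero_le_one) hcont.continuousOn
  have hx₀ : ‖x₀‖ = 1 := by simpa using hx₀
  refine ⟨⟪x₀, A x₀⟫, hA x₀ (norm_ne_zero_iff.mp (by simp [hx₀])), fun x => ?_⟩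
  rcases eq_or_ne x 0 with rfl | hx
  · simp
  have hx' : 0 < ‖x‖ := norm_pos_iff.mpr hx
  have hle : ⟪x₀, A x₀⟫ ≤ ⟪‖x‖⁻¹ • x, A (‖x‖⁻¹ • x)⟫ :=
    hmin (show ‖x‖⁻¹ • x ∈ sphere (0 : E) 1 by simp [norm_smul, hx'.ne'])
  simp only [map_smul, real_inner_smul_left, real_inner_smul_right] at hle
  calc ⟪x₀, A x₀⟫ * ‖x‖ ^ 2 ≤ ‖x‖ ^ 2 * (‖x‖⁻¹ * (‖x‖⁻¹ * ⟪x, A x⟫)) := by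
        rw [mul_comm]; gcongr
    _ = ⟪x, A x⟫ := by field_simp

section VariationalInequality

variable {A : Euc n →ₗ[ℝ] Euc n} {K : Euc n →ₗ[ℝ] Rows m d}

lemma IsVISol.inner_sub_le {u u' y y' : Euc n} (hy : IsVISol A K u y) (hy' : IsVISol A K u' y') :
    ⟪y' - y, A (y' - y)⟫ ≤ ⟪u' - u, y' - y⟫ := by
  have h₁ := hy y'
  have h₂ := hy' y
  have hsum : ∑ j, (‖K y' j‖ - ‖K y j‖) + ∑ j, (‖K y j‖ - ‖K y' j‖) = 0 := by
    rw [← Finset.sum_add_distrib]; simp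
  rw [← neg_sub y' y, inner_neg_right, inner_neg_right] at h₂
  rw [real_inner_comm (A (y' - y)), map_sub, inner_sub_left, inner_sub_left]
  linarith

lemma IsVISol.norm_sub_le {c : ℝ} (hc : 0 < c) (hcoe : ∀ x, c * ‖x‖ ^ 2 ≤ ⟪x, A x⟫)
    {u u' y y' : Euc n} (hy : IsVISol A K u y) (hy' : IsVISol A K u' y') :
    ‖y' - y‖ ≤ ‖u' - u‖ / c := by
  rw [le_div_iff₀ hc]
  rcases (norm_nonneg (y' - y)).eq_or_lt with h0 | hpos
  · rw [← h0, zero_mul]; positivity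
  refine le_of_mul_le_mul_right ?_ hpos
  calc ‖y' - y‖ * c * ‖y' - y‖ = c * ‖y' - y‖ ^ 2 := by ring
    _ ≤ ⟪u' - u, y' - y⟫ := (hcoe _).trans (hy.inner_sub_le hy')
    _ ≤ ‖u' - u‖ * ‖y' - y‖ := real_inner_le_norm _ _

lemma IsVISol.inner_le_dirRHS {u y : Euc n} (hy : IsVISol A K u y) (w : Euc n) :
    ⟪u - A y, w⟫ ≤ dirRHS K y w := by
  rw [← sub_nonneg]
  refine nonneg_of_eventually_nonneg_mul_add_sq_mul (g := rowRemainder K y w)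
    (Continuous.rowRemainder K y (f := fun _ => w) continuous_const continuous_id).continuousAt ?_
  filter_upwards [self_mem_nhdsWithin] with s (hs : 0 < s)
  have h := hy (y + s • w)
  rw [add_sub_cancel_left, sum_norm_add_smul_sub K y w hs, real_inner_smul_right,
    real_inner_smul_right] at h
  rw [inner_sub_left]
  linarith

lemma IsVISol.nonneg_first_add_second_order {u h y g : Euc n} {t : ℝ} (ht : 0 < t)
    (hy : IsVISol A K (u + t • h) (y + t • g)) (w : Euc n) :
    0 ≤ t * (dirRHS K y w - ⟪u - A y, w⟫ - (dirRHS K y g - ⟪u - A y, g⟫))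
      + t ^ 2 * (⟪A g - h, w - g⟫ + rowRemainder K y w t - rowRemainder K y g t) := by
  have H := hy (y + t • w)
  have hsum : ∑ j, (‖K (y + t • w) j‖ - ‖K (y + t • g) j‖)
      = ∑ j, (‖K (y + t • w) j‖ - ‖K y j‖) - ∑ j, (‖K (y + t • g) j‖ - ‖K y j‖) := by
    rw [← Finset.sum_sub_distrib]; simp
  rw [hsum, sum_norm_add_smul_sub K y w ht, sum_norm_add_smul_sub K y g ht,
    add_sub_add_left_eq_sub, ← smul_sub] at H
  simp only [map_add, map_smul, inner_add_left, inner_sub_left, inner_sub_right,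
    real_inner_smul_left, real_inner_smul_right] at H ⊢
  nlinarith

lemma VI1Sol.eq (hA : ∀ x, x ≠ 0 → 0 < ⟪x, A x⟫) {u y h η η' : Euc n}
    (hη : VI1Sol A K u y h η) (hη' : VI1Sol A K u y h η') : η' = η := by
  by_contra hne
  have h₁ := hη.2 η' hη'.1
  have h₂ := hη'.2 η hη.1
  have hpos := hA _ (sub_ne_zero.mpr hne)
  have hB := secondForm_sub_add_sub K y η η'
  have hB₀ := secondForm_self_nonneg K y (η - η')
  rw [← neg_sub η' η] at h₂ hB hB₀
  simp only [map_sub, inner_neg_right, inner_sub_left, inner_sub_right] at h₁ h₂ hpos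
  simp only [real_inner_comm (A η), real_inner_comm (A η')] at hpos
  linarith

lemma VI1Sol.of_forall_nonneg {u y h z : Euc n} (hz : z ∈ Kcone A K u y)
    (hmin : ∀ v ∈ Kcone A K u y,
      0 ≤ ⟪A z - h, v - z⟫ + secondForm K y v v / 2 - secondForm K y z z / 2) :
    VI1Sol A K u y h z := by
  refine ⟨hz, fun v hv => ?_⟩
  have hstep : ∀ᶠ s in 𝓝[>] (0 : ℝ), 0 ≤ s * (⟪A z - h, v - z⟫ + secondForm K y z (v - z))
      + s ^ 2 * (secondForm K y (v - z) (v - z) / 2) := by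
    filter_upwards [Ioc_mem_nhdsGT one_pos] with s hs
    have := hmin _ ((convex_Kcone K y A u).add_smul_sub_mem hz hv ⟨hs.1.le, hs.2⟩)
    rw [add_sub_cancel_left, secondForm_add_smul_self, inner_smul_right] at this
    linarith
  have := nonneg_of_eventually_nonneg_mul_add_sq_mul continuousAt_const hstep
  rw [inner_sub_left] at this
  show _ ≥ _
  linarith

end VariationalInequality

lemma MapClusterPt.prodMk {α X Y : Type*} [TopologicalSpace X] [TopologicalSpace Y]
    {l : Filter α} {g : α → X} {f : α → Y} {x : X} {z : Y} (hz : MapClusterPt z l f)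
    (hg : Tendsto g l (𝓝 x)) : MapClusterPt (x, z) l fun t => (g t, f t) := by
  rw [mapClusterPt_iff_frequently] at hz ⊢
  intro s hs
  rw [nhds_prod_eq] at hs
  obtain ⟨U, hU, V, hV, hUV⟩ := mem_prod_iff.mp hs
  exact ((hg.eventually_mem hU).and_frequently (hz V hV)).mono fun t ht => hUV ⟨ht.1, ht.2⟩

lemma MapClusterPt.nonneg_of_continuous {α X Y : Type*} [TopologicalSpace X]
    [TopologicalSpace Y] {l : Filter α} {g : α → X} {f : α → Y} {x : X} {z : Y}
    (hz : MapClusterPt z l f) (hg : Tendsto g l (𝓝 x)) {H : X × Y → ℝ} (hH : Continuous H)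
    (hev : ∀ᶠ t in l, 0 ≤ H (g t, f t)) : 0 ≤ H (x, z) :=
  (isClosed_le continuous_const hH).mem_of_mapClusterPt (hz.prodMk hg) hev

section DifferenceQuotient

variable {A : Euc n →ₗ[ℝ] Euc n} {K : Euc n →ₗ[ℝ] Rows m d} {S : Euc n → Euc n}

lemma isVISol_add_smul_diffQuot (hS : ∀ u, IsVISol A K u (S u)) (u h : Euc n) {t : ℝ}
    (ht : t ≠ 0) : IsVISol A K (u + t • h) (S u + t • (t⁻¹ • (S (u + t • h) - S u))) := by
  rw [smul_inv_smul₀ ht, add_sub_cancel]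
  exact hS _

lemma mem_Kcone_of_mapClusterPt (hS : ∀ u, IsVISol A K u (S u)) {u h z : Euc n}
    (hz : MapClusterPt z (𝓝[>] 0) fun t : ℝ => t⁻¹ • (S (u + t • h) - S u)) :
    z ∈ Kcone A K u (S u) := by
  set y := S u
  have hlim := hz.nonneg_of_continuous (tendsto_id.mono_left nhdsWithin_le_nhds)
    (H := fun p => dirRHS K y 0 - ⟪u - A y, 0⟫ - (dirRHS K y p.2 - ⟪u - A y, p.2⟫)
      + p.1 * (⟪A p.2 - h, 0 - p.2⟫ + rowRemainder K y 0 p.1 - rowRemainder K y p.2 p.1))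
    (by
      have := continuous_dirRHS K y
      have := Continuous.rowRemainder K y (f := fun _ : ℝ × Euc n => 0) continuous_const
        continuous_fst
      have := Continuous.rowRemainder K y continuous_snd continuous_fst
      have := A.continuous_of_finiteDimensional
      fun_prop) ?_
  · simp only [dirRHS_zero, inner_zero_right, zero_mul, add_zero, zero_sub] at hlim
    show dirRHS K y z ≤ ⟪u - A y, z⟫
    linarith
  · filter_upwards [self_mem_nhdsWithin] with t (ht : 0 < t)
    have := (isVISol_add_smul_diffQuot hS u h ht.ne').nonneg_first_add_second_order ht 0
    exact nonneg_of_mul_nonneg_right (by rw [id]; linear_combination this) ht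

lemma inner_add_secondForm_nonneg_of_mapClusterPt (hS : ∀ u, IsVISol A K u (S u))
    {u h z : Euc n}
    (hz : MapClusterPt z (𝓝[>] 0) fun t : ℝ => t⁻¹ • (S (u + t • h) - S u))
    {v : Euc n} (hv : v ∈ Kcone A K u (S u)) :
    0 ≤ ⟪A z - h, v - z⟫ + secondForm K (S u) v v / 2 - secondForm K (S u) z z / 2 := by
  have hlim := hz.nonneg_of_continuous (tendsto_id.mono_left nhdsWithin_le_nhds)
    (H := fun p =>
      ⟪A p.2 - h, v - p.2⟫ + rowRemainder K (S u) v p.1 - rowRemainder K (S u) p.2 p.1)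
    (by
      have := Continuous.rowRemainder K (S u) (f := fun _ : ℝ × Euc n => v) continuous_const
        continuous_fst
      have := Continuous.rowRemainder K (S u) continuous_snd continuous_fst
      have := A.continuous_of_finiteDimensional
      fun_prop) ?_
  · simpa only [rowRemainder_at_zero] using hlim
  · filter_upwards [self_mem_nhdsWithin] with t (ht : 0 < t)
    have hexp := (isVISol_add_smul_diffQuot hS u h ht.ne').nonneg_first_add_second_order ht v
    have hv' : dirRHS K (S u) v ≤ ⟪u - A (S u), v⟫ := hv
    have hg := (hS u).inner_le_dirRHS (t⁻¹ • (S (u + t • h) - S u))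
    refine nonneg_of_mul_nonneg_right (a := t ^ 2) ?_ (by positivity)
    rw [id]
    linarith [mul_nonneg ht.le (sub_nonneg.mpr hv'), mul_nonneg ht.le (sub_nonneg.mpr hg)]

lemma VI1Sol.of_mapClusterPt (hS : ∀ u, IsVISol A K u (S u)) {u h z : Euc n}
    (hz : MapClusterPt z (𝓝[>] 0) fun t : ℝ => t⁻¹ • (S (u + t • h) - S u)) :
    VI1Sol A K u (S u) h z :=
  .of_forall_nonneg (mem_Kcone_of_mapClusterPt hS hz) fun _ hv =>
    inner_add_secondForm_nonneg_of_mapClusterPt hS hz hv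

lemma norm_diffQuot_le (hS : ∀ u, IsVISol A K u (S u)) {c : ℝ} (hc : 0 < c)
    (hcoe : ∀ x, c * ‖x‖ ^ 2 ≤ ⟪x, A x⟫) (u h : Euc n) {t : ℝ} (ht : 0 < t) :
    ‖t⁻¹ • (S (u + t • h) - S u)‖ ≤ ‖h‖ / c := by
  have hle := (hS u).norm_sub_le hc hcoe (hS (u + t • h))
  rw [add_sub_cancel_left, norm_smul, Real.norm_of_nonneg ht.le] at hle
  rw [norm_smul, Real.norm_of_nonneg (inv_nonneg.mpr ht.le), inv_mul_le_iff₀ ht]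
  linarith [mul_div_assoc t ‖h‖ c]

end DifferenceQuotient

theorem stmt12_general {n m d : ℕ} (A : Euc n →ₗ[ℝ] Euc n)
    (hApos : ∀ x : Euc n, x ≠ 0 → 0 < ⟪x, A x⟫)
    (K : Euc n →ₗ[ℝ] Rows m d)
    (S : Euc n → Euc n) (hS : ∀ u : Euc n, IsVISol A K u (S u)) :
    ∀ u h : Euc n, ∃ η : Euc n,
      Filter.Tendsto (fun t : ℝ => t⁻¹ • (S (u + t • h) - S u))
        (nhdsWithin 0 (Set.Ioi 0)) (nhds η) ∧
      VI1Sol A K u (S u) h η ∧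
      ∀ η' : Euc n, VI1Sol A K u (S u) h η' → η' = η := by
  intro u h
  obtain ⟨c, hc, hcoe⟩ := exists_pos_mul_norm_sq_le_inner A hApos
  have hbdd : ∀ᶠ t in 𝓝[>] (0 : ℝ), t⁻¹ • (S (u + t • h) - S u) ∈ closedBall 0 (‖h‖ / c) := by
    filter_upwards [self_mem_nhdsWithin] with t ht
    exact mem_closedBall_zero_iff.mpr (norm_diffQuot_le hS hc hcoe u h ht)
  obtain ⟨η, -, hη⟩ :=
    (isCompact_closedBall _ _).exists_mapClusterPt (tendsto_principal.mpr hbdd)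
  have hsol := VI1Sol.of_mapClusterPt hS hη
  refine ⟨η, ?_, hsol, fun η' hη' => hsol.eq hApos hη'⟩
  exact (isCompact_closedBall _ _).tendsto_nhds_of_unique_mapClusterPt hbdd
    fun z _ hz => hsol.eq hApos (VI1Sol.of_mapClusterPt hS hz)

/-- directional differentiability of the solution operator; the
directional derivative is the unique solution of the VI of the first kind. -/
theorem stmt12 {n m d : ℕ} (A : Euc n →ₗ[ℝ] Euc n)
    (hAsymm : ∀ x z : Euc n, ⟪A x, z⟫ = ⟪x, A z⟫)
    (hApos : ∀ x : Euc n, x ≠ 0 → 0 < ⟪x, A x⟫)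
    (K : Euc n →ₗ[ℝ] Rows m d) (hK : Function.Injective K)
    (S : Euc n → Euc n) (hS : ∀ u : Euc n, IsVISol A K u (S u)) :
    ∀ u h : Euc n, ∃ η : Euc n,
      Filter.Tendsto (fun t : ℝ => t⁻¹ • (S (u + t • h) - S u))
        (nhdsWithin 0 (Set.Ioi 0)) (nhds η) ∧
      VI1Sol A K u (S u) h η ∧
      ∀ η' : Euc n, VI1Sol A K u (S u) h η' → η' = η :=
  stmt12_general A hApos K S hS
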